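/- Let n ≥ 3 and let t be a nonzero complex number. Then the only ℂ-subspaces U of ℂ^{n−1} satisfying S′_i(t)·U ⊆ U for all 1 ≤ i ≤ n−1 are U = 0 and U = ℂ^{n−1} (i.e. the complex specialization of the representation η₁′ is irreducible) if and only if (n−2)·t ≠ 2n−2 and t ≠ 2. -/

import Mathlib

noncomputable section
open Matrix

/-- The complex `m × m` matrix agreeing with the identity except in rows and columns
`i, i+1` (0-indexed), where it has the `2 × 2` block `[[1-t, t], [2-t, t-1]]`. -/
def SmatC (m : ℕ) (t : ℂ) (i : ℕ) : Matrix (Fin m) (Fin m) ℂ :=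
  Matrix.of fun j k =>
    if j.val = i ∧ k.val = i then 1 - t
    else if j.val = i ∧ k.val = i + 1 then t
    else if j.val = i + 1 ∧ k.val = i then 2 - t
    else if j.val = i + 1 ∧ k.val = i + 1 then t - 1
    else if j = k then 1 else 0

/-- The complex `m × m` matrix agreeing with the identity except in its last row,
which is `(t-2, t-2, …, t-2, -1)`. -/
def SlastC (m : ℕ) (t : ℂ) : Matrix (Fin m) (Fin m) ℂ :=
  Matrix.of fun j k =>
    if j.val = m - 1 then (if k.val = m - 1 then -1 else t - 2)
    else if j = k then 1 else 0

/-!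
Each `S′ᵢ(t)` is a reflection `1 + uᵢ φᵢᵀ` (with `φᵢ · uᵢ = -2`), so a subspace `U` is invariant
exactly when `(φᵢ · v) uᵢ ∈ U` for all `v ∈ U`. The coroots `φᵢ` vanish simultaneously only on
multiples of the all-ones vector, where the last one takes the value `(n - 2) t - (2n - 2)` times
the entry. So when this is nonzero, a nonzero `U` contains some root `uᵢ`; neighbouring roots pair
nontrivially with each other's coroots (the pairings are `2 - t`, `t`, `(t - 2)²` and `1`), hence
`U` contains every root, and for `t ≠ 0` the roots span, being triangular. Conversely, for
`(n - 2) t = 2n - 2` the all-ones vector is fixed, and for `t = 2` the matrices are upper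
triangular, so the first basis vector spans an invariant line.
-/

open Relation Submodule

theorem Submodule.eq_bot_or_eq_top_of_forall_smul_mem {K V ι : Type*} [DivisionRing K]
    [AddCommGroup V] [Module K V] {u : ι → V} {φ : ι → V → K} (U : Submodule K V)
    (hU : ∀ i, ∀ v ∈ U, φ i v • u i ∈ U) (hsep : ∀ v, (∀ i, φ i v = 0) → v = 0)
    (hconn : ∀ i j, ReflTransGen (fun i j => φ j (u i) ≠ 0) i j)
    (hspan : span K (Set.range u) = ⊤) : U = ⊥ ∨ U = ⊤ := by
  refine or_iff_not_imp_left.2 fun hU0 => ?_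
  obtain ⟨v, hv, hv0⟩ := U.ne_bot_iff.1 hU0
  obtain ⟨i, hi⟩ : ∃ i, φ i v ≠ 0 := by
    by_contra! h
    exact hv0 (hsep v h)
  have hmem : ∀ j, u j ∈ U := fun j => by
    induction hconn i j with
    | refl => exact (U.smul_mem_iff hi).1 (hU i v hv)
    | tail _ hjk ih => exact (U.smul_mem_iff hjk).1 (hU _ _ ih)
  rw [eq_top_iff, ← hspan, span_le]
  rintro _ ⟨j, rfl⟩
  exact hmem j

theorem Submodule.span_singleton_ne_top_of_one_lt_finrank {K V : Type*} [DivisionRing K]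
    [AddCommGroup V] [Module K V] (hV : 1 < Module.finrank K V) {x : V} (hx : x ≠ 0) :
    K ∙ x ≠ ⊤ := by
  intro h
  have := finrank_span_singleton (K := K) hx
  rw [h, finrank_top] at this
  omega

theorem Fin.reflTransGen_of_succ {m : ℕ} {r : Fin (m + 1) → Fin (m + 1) → Prop}
    (h : ∀ k : Fin m, r k.castSucc k.succ ∧ r k.succ k.castSucc) (i j : Fin (m + 1)) :
    ReflTransGen r i j := by
  have h0 : ∀ i, ReflTransGen r 0 i ∧ ReflTransGen r i 0 := fun i => by
    induction i using Fin.induction with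
    | zero => exact ⟨.refl, .refl⟩
    | succ k ih => exact ⟨ih.1.tail (h k).1, ih.2.head (h k).2⟩
  exact (h0 i).2.trans (h0 j).1

section RankOneUpdate

variable {K n : Type*} [Field K] [Fintype n] [DecidableEq n]

theorem one_add_vecMulVec_mulVec_mem_iff {U : Submodule K (n → K)} {v : n → K} (hv : v ∈ U)
    (a b : n → K) : (1 + vecMulVec a b) *ᵥ v ∈ U ↔ (b ⬝ᵥ v) • a ∈ U := by
  rw [add_mulVec, one_mulVec, vecMulVec_mulVec, op_smul_eq_smul, U.add_mem_iff_right hv]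

theorem one_add_vecMulVec_mulVec_mem_span_singleton {a b x : n → K}
    (h : (b ⬝ᵥ x) • a ∈ K ∙ x) : ∀ v ∈ K ∙ x, (1 + vecMulVec a b) *ᵥ v ∈ K ∙ x := by
  intro v hv
  obtain ⟨c, rfl⟩ := mem_span_singleton.1 hv
  rw [mulVec_smul]
  exact smul_mem _ c ((one_add_vecMulVec_mulVec_mem_iff (mem_span_singleton_self x) a b).2 h)

end RankOneUpdate

-- `S′ᵢ(t) = 1 + etaRoot i ⊗ etaCoroot i` on `ℂ^(m+1)`, so `m = n - 2`, and `Fin.last m` indexes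
-- the generator `S′_{n-1}(t)`.
def etaRoot (m : ℕ) (t : ℂ) : Fin (m + 1) → Fin (m + 1) → ℂ :=
  Fin.lastCases (Pi.single (Fin.last m) 1) fun k =>
    Pi.single k.castSucc t + Pi.single k.succ (t - 2)

def etaCoroot (m : ℕ) (t : ℂ) : Fin (m + 1) → Fin (m + 1) → ℂ :=
  Fin.lastCases ((t - 2) • 1 - Pi.single (Fin.last m) t) fun k =>
    Pi.single k.succ 1 - Pi.single k.castSucc 1

section Eta

variable (m : ℕ) (t : ℂ)

theorem SmatC_eq (k : Fin m) :
    SmatC (m + 1) t k = 1 + vecMulVec (etaRoot m t k.castSucc) (etaCoroot m t k.castSucc) := by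
  ext j l
  simp only [SmatC, etaRoot, etaCoroot, Fin.lastCases_castSucc, of_apply, Matrix.add_apply,
    one_apply, vecMulVec_apply, Pi.add_apply, Pi.sub_apply, Pi.single_apply, Fin.ext_iff,
    Fin.val_succ, Fin.val_castSucc]
  split_ifs <;> first | omega | ring

theorem SlastC_eq :
    SlastC (m + 1) t = 1 + vecMulVec (etaRoot m t (Fin.last m)) (etaCoroot m t (Fin.last m)) := by
  ext j l
  simp only [SlastC, etaRoot, etaCoroot, Fin.lastCases_last, of_apply, Matrix.add_apply,
    one_apply, vecMulVec_apply, Pi.sub_apply, Pi.smul_apply, Pi.one_apply, Pi.single_apply,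
    Fin.ext_iff, Fin.val_last, smul_eq_mul, add_tsub_cancel_right]
  split_ifs <;> first | omega | ring

theorem ite_SlastC_SmatC_eq (i : Fin (m + 1)) :
    (if i.val = m then SlastC (m + 1) t else SmatC (m + 1) t i.val) =
      1 + vecMulVec (etaRoot m t i) (etaCoroot m t i) := by
  induction i using Fin.lastCases with
  | last => rw [if_pos (Fin.val_last m), SlastC_eq]
  | cast k => rw [Fin.val_castSucc, if_neg k.is_lt.ne, SmatC_eq]

variable {m t}

theorem etaCoroot_castSucc_dotProduct (k : Fin m) (v : Fin (m + 1) → ℂ) :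
    etaCoroot m t k.castSucc ⬝ᵥ v = v k.succ - v k.castSucc := by
  simp [etaCoroot, sub_dotProduct, single_dotProduct]

theorem etaCoroot_last_dotProduct (v : Fin (m + 1) → ℂ) :
    etaCoroot m t (Fin.last m) ⬝ᵥ v = (t - 2) * ∑ i, v i - t * v (Fin.last m) := by
  simp [etaCoroot, sub_dotProduct, single_dotProduct, one_dotProduct]

theorem eq_zero_of_forall_etaCoroot_dotProduct_eq_zero (hmt : (m : ℂ) * t ≠ 2 * m + 2)
    {v : Fin (m + 1) → ℂ} (hv : ∀ i, etaCoroot m t i ⬝ᵥ v = 0) : v = 0 := by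
  have hconst : ∀ i, v i = v 0 := fun i => by
    induction i using Fin.induction with
    | zero => rfl
    | succ k ih =>
      have hk := hv k.castSucc
      rw [etaCoroot_castSucc_dotProduct, sub_eq_zero] at hk
      rw [hk, ih]
  have hlast := hv (Fin.last m)
  simp only [etaCoroot_last_dotProduct, hconst, Finset.sum_const, Finset.card_univ,
    Fintype.card_fin, nsmul_eq_mul] at hlast
  have hv0 : v 0 = 0 := by
    refine (mul_eq_zero.1 ?_).resolve_right (sub_ne_zero.2 hmt)
    push_cast at hlast
    linear_combination hlast
  exact funext fun i => (hconst i).trans hv0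

theorem etaCoroot_dotProduct_etaRoot_adjacent (ht : t ≠ 0) (ht2 : t ≠ 2) (k : Fin m) :
    etaCoroot m t k.succ ⬝ᵥ etaRoot m t k.castSucc ≠ 0 ∧
      etaCoroot m t k.castSucc ⬝ᵥ etaRoot m t k.succ ≠ 0 := by
  have ht2' : t - 2 ≠ 0 := sub_ne_zero.2 ht2
  rcases Fin.eq_castSucc_or_eq_last k.succ with ⟨l, hl⟩ | hl
  · have hkl : l.val = k.val + 1 := by simpa [Fin.ext_iff] using hl.symm
    have h1 : etaCoroot m t k.succ ⬝ᵥ etaRoot m t k.castSucc = -(t - 2) := by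
      rw [hl, etaCoroot_castSucc_dotProduct]
      simp [etaRoot, Pi.single_apply, Fin.ext_iff, hkl, add_assoc]
    have h2 : etaCoroot m t k.castSucc ⬝ᵥ etaRoot m t k.succ = t := by
      rw [hl, etaCoroot_castSucc_dotProduct]
      simp [etaRoot, Pi.single_apply, Fin.ext_iff, hkl, add_assoc]
    rw [h1, h2]
    exact ⟨neg_ne_zero.2 ht2', ht⟩
  · have hkm : k.val + 1 = m := by simpa [Fin.ext_iff] using hl
    have h1 : etaCoroot m t k.succ ⬝ᵥ etaRoot m t k.castSucc = (t - 2) ^ 2 := by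
      rw [hl, etaCoroot_last_dotProduct]
      simp only [etaRoot, Fin.lastCases_castSucc, Pi.add_apply, Finset.sum_add_distrib,
        Finset.sum_pi_single', Finset.mem_univ, if_true]
      simp [Pi.single_apply, Fin.ext_iff, ← hkm]
      ring
    have h2 : etaCoroot m t k.castSucc ⬝ᵥ etaRoot m t k.succ = 1 := by
      rw [hl, etaCoroot_castSucc_dotProduct]
      simp [etaRoot, Pi.single_apply, Fin.ext_iff, ← hkm]
    rw [h1, h2]
    exact ⟨pow_ne_zero 2 ht2', one_ne_zero⟩

theorem span_range_etaRoot (ht : t ≠ 0) : span ℂ (Set.range (etaRoot m t)) = ⊤ := by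
  have hsingle : ∀ i, Pi.single i 1 ∈ span ℂ (Set.range (etaRoot m t)) := fun i => by
    induction i using Fin.reverseInduction with
    | last => exact subset_span ⟨Fin.last m, Fin.lastCases_last⟩
    | cast k ih =>
      have h : Pi.single k.castSucc (1 : ℂ) =
          t⁻¹ • (etaRoot m t k.castSucc - (t - 2) • Pi.single k.succ 1) := by
        rw [etaRoot, Fin.lastCases_castSucc, ← Pi.single_smul, smul_eq_mul, mul_one,
          add_sub_cancel_right, ← Pi.single_smul, smul_eq_mul, inv_mul_cancel₀ ht]
      rw [h]
      exact smul_mem _ _ (sub_mem (subset_span ⟨_, rfl⟩) (smul_mem _ _ ih))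
  rw [eq_top_iff, ← (Pi.basisFun ℂ (Fin (m + 1))).span_eq, span_le]
  rintro _ ⟨i, rfl⟩
  rw [Pi.basisFun_apply]
  exact hsingle i

theorem etaCoroot_dotProduct_one (hmt : (m : ℂ) * t = 2 * m + 2) (i : Fin (m + 1)) :
    etaCoroot m t i ⬝ᵥ 1 = 0 := by
  induction i using Fin.lastCases with
  | last =>
    simp only [etaCoroot_last_dotProduct, Pi.one_apply, Finset.sum_const, Finset.card_univ,
      Fintype.card_fin, nsmul_eq_mul, mul_one]
    push_cast
    linear_combination hmt
  | cast k => simp [etaCoroot_castSucc_dotProduct]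

theorem etaCoroot_two_dotProduct_single_zero_smul_mem (hm : 1 ≤ m) (i : Fin (m + 1)) :
    (etaCoroot m 2 i ⬝ᵥ Pi.single 0 1) • etaRoot m 2 i ∈ ℂ ∙ (Pi.single 0 1 : Fin (m + 1) → ℂ) := by
  rw [dotProduct_single_one]
  induction i using Fin.lastCases with
  | last =>
    have : NeZero m := ⟨by omega⟩
    have h0 : (0 : Fin (m + 1)) ≠ Fin.last m := Fin.last_pos'.ne
    simp [etaCoroot, h0]
  | cast k =>
    by_cases hk : k.castSucc = 0
    · refine smul_mem _ _ (mem_span_singleton.2 ⟨2, ?_⟩)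
      rw [etaRoot, Fin.lastCases_castSucc, hk, sub_self, Pi.single_zero, add_zero,
        ← Pi.single_smul, smul_eq_mul, mul_one]
    · simp [etaCoroot, Ne.symm hk, (Fin.succ_ne_zero k).symm]

theorem exists_ne_zero_forall_smul_etaRoot_mem_span_singleton (hm : 1 ≤ m)
    (h : ¬((m : ℂ) * t ≠ 2 * m + 2 ∧ t ≠ 2)) :
    ∃ x ≠ 0, ∀ i, (etaCoroot m t i ⬝ᵥ x) • etaRoot m t i ∈ ℂ ∙ x := by
  rcases not_and_or.1 h with hmt | ht2
  · refine ⟨1, one_ne_zero, fun i => ?_⟩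
    rw [etaCoroot_dotProduct_one (not_not.1 hmt), zero_smul]
    exact zero_mem _
  · rw [not_not.1 ht2]
    exact ⟨Pi.single 0 1, by simp, etaCoroot_two_dotProduct_single_zero_smul_mem hm⟩

end Eta

/-- For `n ≥ 3` and a nonzero complex number `t`, the only `ℂ`-subspaces of
`ℂ^{n-1}` invariant under all the matrices `S′ᵢ(t)` (the complex specialization of the
composition factor `η₁′`; here 0-indexed: for `i.val < n-2` the matrix with block
`[[1-t, t], [2-t, t-1]]` in rows/columns `i, i+1`, and for `i.val = n-2` the matrix
whose last row is `(t-2, …, t-2, -1)`) are `0` and `ℂ^{n-1}` if and only if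
`(n-2)·t ≠ 2n-2` and `t ≠ 2`. -/
theorem statement5 (n : ℕ) (hn : 3 ≤ n) (t : ℂ) (ht : t ≠ 0) :
    (∀ U : Submodule ℂ (Fin (n - 1) → ℂ),
        (∀ i : Fin (n - 1), ∀ v ∈ U,
          (if i.val = n - 2 then SlastC (n - 1) t else SmatC (n - 1) t i.val) *ᵥ v ∈ U) →
        U = ⊥ ∨ U = ⊤) ↔
    (((n : ℂ) - 2) * t ≠ 2 * (n : ℂ) - 2 ∧ t ≠ 2) := by
  obtain ⟨m, rfl⟩ : ∃ m, n = m + 2 := ⟨n - 2, by omega⟩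
  have hcond : ((m + 2 : ℕ) - 2 : ℂ) * t ≠ 2 * (m + 2 : ℕ) - 2 ↔ (m : ℂ) * t ≠ 2 * m + 2 := by
    push_cast
    ring_nf
  show (∀ U : Submodule ℂ (Fin (m + 1) → ℂ), (∀ i : Fin (m + 1), ∀ v ∈ U,
    (if i.val = m then SlastC (m + 1) t else SmatC (m + 1) t i.val) *ᵥ v ∈ U) → U = ⊥ ∨ U = ⊤) ↔ _
  simp only [ite_SlastC_SmatC_eq]
  rw [hcond]
  constructor
  · intro hirr
    by_contra hred
    obtain ⟨x, hx, hline⟩ := exists_ne_zero_forall_smul_etaRoot_mem_span_singleton (by omega) hred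
    rcases hirr (ℂ ∙ x) fun i => one_add_vecMulVec_mulVec_mem_span_singleton (hline i) with h | h
    · exact hx (span_singleton_eq_bot.1 h)
    · exact span_singleton_ne_top_of_one_lt_finrank (by rw [Module.finrank_fin_fun]; omega) hx h
  · rintro ⟨hmt, ht2⟩ U hU
    exact U.eq_bot_or_eq_top_of_forall_smul_mem
      (fun i v hv => (one_add_vecMulVec_mulVec_mem_iff hv _ _).1 (hU i v hv))
      (fun _ => eq_zero_of_forall_etaCoroot_dotProduct_eq_zero hmt)
      (Fin.reflTransGen_of_succ (etaCoroot_dotProduct_etaRoot_adjacent ht ht2))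
      (span_range_etaRoot ht)
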